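/- Let a > 0 and define, for s ∈ ℝ, α(s) = (s, a − a∫₀^s(∫₀^σ sinh(t²/2) dt) dσ, a∫₀^s(∫₀^σ cosh(t²/2) dt) dσ), which is an admissible spacelike curve in the pseudo-Galilean space G¹₃ with tangent T(s) = (1, −a∫₀^s sinh(t²/2) dt, a∫₀^s cosh(t²/2) dt), principal normal N(s) = (0, −sinh(s²/2), cosh(s²/2)) and binormal B(s) = (0, −cosh(s²/2), sinh(s²/2)). Then the position vector decomposes as α(s) = s·T(s) + 0·N(s) − a·B(s) for all s ∈ ℝ; consequently, with m₀(s) = s, m₁(s) = 0, m₂(s) = −a, the quantity m₂(s)² − m₁(s)² = a² is constant, so α is an N-constant curve of second kind in G¹₃. -/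

import Mathlib

/-! The coordinates of `αSal a` are second primitives of `-a sinh (t²/2)` and `a cosh (t²/2)`.
Integrating by parts, `∫₀ˢ ∫₀^σ f = s ∫₀ˢ f - ∫₀ˢ t f(t) dt`, and since `t sinh (t²/2)` and
`t cosh (t²/2)` are the derivatives of `cosh (t²/2)` and `sinh (t²/2)`, the position vector is
`s T - a B`. Differentiating twice gives `a N`, and `cosh² - sinh² = 1` makes
`y''² - z''² = -a²`, so the frame is completed by `B = -(z'', y'') / a`. -/

/-- The curve of Example 4.2 (shifted so that its position vector is
`s • T + 0 • N + (-a) • B`). -/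
noncomputable def αSal (a : ℝ) : ℝ → ℝ × ℝ × ℝ := fun s =>
  (s, a - a * ∫ σ in (0 : ℝ)..s, ∫ t in (0 : ℝ)..σ, Real.sinh (t ^ 2 / 2),
      a * ∫ σ in (0 : ℝ)..s, ∫ t in (0 : ℝ)..σ, Real.cosh (t ^ 2 / 2))

/-- Its tangent vector. -/
noncomputable def TSal (a : ℝ) : ℝ → ℝ × ℝ × ℝ := fun s =>
  (1, -a * ∫ t in (0 : ℝ)..s, Real.sinh (t ^ 2 / 2),
      a * ∫ t in (0 : ℝ)..s, Real.cosh (t ^ 2 / 2))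

/-- Its principal normal vector. -/
noncomputable def NSal : ℝ → ℝ × ℝ × ℝ := fun s =>
  (0, -Real.sinh (s ^ 2 / 2), Real.cosh (s ^ 2 / 2))

/-- Its binormal vector. -/
noncomputable def BSal : ℝ → ℝ × ℝ × ℝ := fun s =>
  (0, -Real.cosh (s ^ 2 / 2), Real.sinh (s ^ 2 / 2))

open Real intervalIntegral

section Primitive

variable {f : ℝ → ℝ}

theorem contDiff_primitive {n : ℕ∞} (hf : ContDiff ℝ n f) (a : ℝ) :
    ContDiff ℝ (n + 1) fun x => ∫ t in a..x, f t := by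
  have hderiv := hf.continuous.integral_hasStrictDerivAt a
  refine contDiff_succ_iff_deriv.2 ⟨fun x => (hderiv x).hasDerivAt.differentiableAt, by simp, ?_⟩
  rwa [funext fun x => (hderiv x).hasDerivAt.deriv]

theorem hasDerivAt_integral_primitive (hf : Continuous f) (a s : ℝ) :
    HasDerivAt (fun x => ∫ σ in a..x, ∫ t in a..σ, f t) (∫ t in a..s, f t) s :=
  ((continuous_primitive (fun _ _ => hf.intervalIntegrable _ _) a).integral_hasStrictDerivAt
    a s).hasDerivAt

/-- Cauchy's formula for repeated integration, in its first nontrivial case. -/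
theorem integral_primitive_eq (hf : Continuous f) (a s : ℝ) :
    ∫ σ in a..s, ∫ t in a..σ, f t = s * (∫ t in a..s, f t) - ∫ t in a..s, t * f t := by
  have hparts := integral_mul_deriv_eq_deriv_mul (a := a) (b := s) (v := id) (v' := fun _ => 1)
    (fun x _ => (hf.integral_hasStrictDerivAt a x).hasDerivAt) (fun x _ => hasDerivAt_id x)
    (hf.intervalIntegrable _ _) intervalIntegrable_const
  simp only [mul_one, id_eq, integral_same, zero_mul, sub_zero] at hparts
  rw [hparts, mul_comm s]
  simp only [mul_comm]

end Primitive

theorem integral_mul_sinh_sq_div_two (s : ℝ) :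
    ∫ t in (0 : ℝ)..s, t * sinh (t ^ 2 / 2) = cosh (s ^ 2 / 2) - 1 := by
  rw [integral_eq_sub_of_hasDerivAt (f := fun t => cosh (t ^ 2 / 2)) (fun t _ => ?_)
    (Continuous.intervalIntegrable (by fun_prop) _ _)]
  · simp
  · simpa [mul_comm] using ((hasDerivAt_pow 2 t).div_const 2).cosh

theorem integral_mul_cosh_sq_div_two (s : ℝ) :
    ∫ t in (0 : ℝ)..s, t * cosh (t ^ 2 / 2) = sinh (s ^ 2 / 2) := by
  rw [integral_eq_sub_of_hasDerivAt (f := fun t => sinh (t ^ 2 / 2)) (fun t _ => ?_)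
    (Continuous.intervalIntegrable (by fun_prop) _ _)]
  · simp
  · simpa [mul_comm] using ((hasDerivAt_pow 2 t).div_const 2).sinh

theorem αSal_eq_frame (a s : ℝ) :
    αSal a s = s • TSal a s + (0 : ℝ) • NSal s + (-a) • BSal s := by
  have hy := integral_primitive_eq (f := fun t => sinh (t ^ 2 / 2)) (by fun_prop) 0 s
  have hz := integral_primitive_eq (f := fun t => cosh (t ^ 2 / 2)) (by fun_prop) 0 s
  rw [integral_mul_sinh_sq_div_two] at hy
  rw [integral_mul_cosh_sq_div_two] at hz
  simp only [αSal, TSal, NSal, BSal, hy, hz, Prod.smul_mk, smul_eq_mul, Prod.mk_add_mk]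
  exact Prod.ext (by ring) (Prod.ext (by ring) (by ring))

theorem contDiff_αSal_snd_fst (a : ℝ) : ContDiff ℝ 3 fun s => (αSal a s).2.1 :=
  contDiff_const.sub <| contDiff_const.mul <|
    contDiff_primitive (n := 2) (contDiff_primitive (n := 1) (contDiff_sinh.comp (by fun_prop)) 0) 0

theorem contDiff_αSal_snd_snd (a : ℝ) : ContDiff ℝ 3 fun s => (αSal a s).2.2 :=
  contDiff_const.mul <|
    contDiff_primitive (n := 2) (contDiff_primitive (n := 1) (contDiff_cosh.comp (by fun_prop)) 0) 0

theorem deriv_αSal_snd_fst (a : ℝ) :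
    deriv (fun s => (αSal a s).2.1) = fun s => (TSal a s).2.1 := by
  funext s
  refine ((hasDerivAt_integral_primitive (by fun_prop) 0 s).const_mul a).const_sub a
    |>.deriv.trans ?_
  simp only [TSal]; ring

theorem deriv_αSal_snd_snd (a : ℝ) :
    deriv (fun s => (αSal a s).2.2) = fun s => (TSal a s).2.2 :=
  funext fun s => ((hasDerivAt_integral_primitive (by fun_prop) 0 s).const_mul a).deriv

theorem deriv_TSal_snd_fst (a : ℝ) :
    deriv (fun s => (TSal a s).2.1) = fun s => a * (NSal s).2.1 := by
  funext s
  refine (((continuous_sinh.comp (by fun_prop)).integral_hasStrictDerivAt 0 s).hasDerivAt.const_mul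
    (-a)).deriv.trans ?_
  simp only [NSal, Function.comp_apply]; ring

theorem deriv_TSal_snd_snd (a : ℝ) :
    deriv (fun s => (TSal a s).2.2) = fun s => a * (NSal s).2.2 :=
  funext fun s =>
    (((continuous_cosh.comp (by fun_prop)).integral_hasStrictDerivAt 0 s).hasDerivAt.const_mul
      a).deriv

theorem NSal_snd_fst_sq_sub_snd_sq (s : ℝ) : (NSal s).2.1 ^ 2 - (NSal s).2.2 ^ 2 = -1 := by
  simp only [NSal, neg_sq]
  linarith [cosh_sq_sub_sinh_sq (s ^ 2 / 2)]

/-- For `a > 0`, the admissible spacelike curve `αSal a` (whose coordinate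
functions are three times continuously differentiable and satisfy the admissibility
condition, with Frenet frame `TSal a`, `NSal`, `BSal`) has position vector decomposing
as `αSal a s = s • TSal a s + 0 • NSal s + (-a) • BSal s`; hence with `m₀ s = s`,
`m₁ s = 0`, `m₂ s = -a` the quantity `m₂² - m₁² = a²` is a nonzero constant, so `αSal a`
is an N-constant curve of second kind in `G¹₃`. -/
theorem stmt_15 (a : ℝ) (ha : 0 < a) :
    ContDiff ℝ 3 (fun s : ℝ => (αSal a s).2.1) ∧
    ContDiff ℝ 3 (fun s : ℝ => (αSal a s).2.2) ∧
    (∀ s : ℝ,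
      (deriv (deriv (fun x : ℝ => (αSal a x).2.1)) s) ^ 2 -
        (deriv (deriv (fun x : ℝ => (αSal a x).2.2)) s) ^ 2 ≠ 0 ∧
      deriv (fun x : ℝ => (αSal a x).2.1) s = (TSal a s).2.1 ∧
      deriv (fun x : ℝ => (αSal a x).2.2) s = (TSal a s).2.2 ∧
      deriv (deriv (fun x : ℝ => (αSal a x).2.1)) s / a = (NSal s).2.1 ∧
      deriv (deriv (fun x : ℝ => (αSal a x).2.2)) s / a = (NSal s).2.2) ∧
    (∃ ε : ℝ, (ε = 1 ∨ ε = -1) ∧ ∀ s : ℝ,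
      |(deriv (deriv (fun x : ℝ => (αSal a x).2.1)) s) ^ 2 -
          (deriv (deriv (fun x : ℝ => (αSal a x).2.2)) s) ^ 2| =
        ε * ((deriv (deriv (fun x : ℝ => (αSal a x).2.1)) s) ^ 2 -
          (deriv (deriv (fun x : ℝ => (αSal a x).2.2)) s) ^ 2) ∧
      ε * deriv (deriv (fun x : ℝ => (αSal a x).2.2)) s / a = (BSal s).2.1 ∧
      ε * deriv (deriv (fun x : ℝ => (αSal a x).2.1)) s / a = (BSal s).2.2) ∧
    (∀ s : ℝ, αSal a s = s • TSal a s + (0 : ℝ) • NSal s + (-a) • BSal s) ∧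
    (∀ s : ℝ, (-a : ℝ) ^ 2 - (0 : ℝ) ^ 2 = a ^ 2) ∧
    a ^ 2 ≠ 0 := by
  have ha0 : a ≠ 0 := ha.ne'
  have hsig (s : ℝ) : (a * (NSal s).2.1) ^ 2 - (a * (NSal s).2.2) ^ 2 = -a ^ 2 := by
    linear_combination a ^ 2 * NSal_snd_fst_sq_sub_snd_sq s
  simp only [deriv_αSal_snd_fst, deriv_αSal_snd_snd, deriv_TSal_snd_fst, deriv_TSal_snd_snd, hsig]
  refine ⟨contDiff_αSal_snd_fst a, contDiff_αSal_snd_snd a,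
    fun s => ⟨by simpa using ha0, trivial, trivial, mul_div_cancel_left₀ _ ha0,
      mul_div_cancel_left₀ _ ha0⟩,
    ⟨-1, Or.inr rfl, fun s => ⟨?_, ?_, ?_⟩⟩, αSal_eq_frame a, fun _ => by ring, by positivity⟩
  · rw [abs_neg, abs_of_pos (by positivity)]; ring
  · field_simp; simp [NSal, BSal]
  · field_simp; simp [NSal, BSal]
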